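/- arXiv:2203.05610 — 2 statements merged into one kernel-verified Lean document; each statement's English description precedes it below -/
import Mathlib

section
/- Murphy–Golub–Wathen property: let M = [[A, B],[Bᵀ, 0]] with A symmetric positive definite and B of full column rank, and let P = [[A, 0],[0, S]] with S = Bᵀ A⁻¹ B the (negated) Schur complement. Then every eigenvalue λ of P⁻¹M satisfies λ = 1, λ = (1+√5)/2, or λ = (1−√5)/2. -/
/-!
Writing `S = Bᵀ A⁻¹ B`, the preconditioned matrix is `P⁻¹ M = [[1, C], [D, 0]]` with
`C = A⁻¹ B` and `D = S⁻¹ Bᵀ`, so `D C = 1`. Any block matrix of this shape is annihilated by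
`(X - 1)(X² - X - 1)`, so every eigenvalue is a root of that polynomial; the roots of `X² - X - 1` are `(1 ± √5) / 2`.
Full column rank of `B` and definiteness of `A` make `S` positive definite, hence invertible.
-/

open Matrix Polynomial

namespace Matrix

variable {m n ι K R : Type*} [Fintype m] [Fintype n]

omit [Fintype m] in
theorem mulVec_injective_of_rank_eq_card [Field K] (B : Matrix m n K)
    (hB : B.rank = Fintype.card n) : Function.Injective B.mulVec := by
  have h := LinearMap.finrank_range_add_finrank_ker B.mulVecLin
  rw [← rank, hB, Module.finrank_fintype_fun_eq_card, add_eq_left,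
    Submodule.finrank_eq_zero, LinearMap.ker_eq_bot] at h
  exact h

theorem eval_eq_zero_of_aeval_eq_zero_of_det_eq_zero [Fintype ι] [DecidableEq ι] [Field K]
    {T : Matrix ι ι K} {p : K[X]} (hp : aeval T p = 0) {μ : K} (hμ : (T - μ • 1).det = 0) :
    p.eval μ = 0 := by
  obtain ⟨v, hv0, hv⟩ := exists_mulVec_eq_zero_iff.mpr hμ
  have hTv : toLinAlgEquiv' T v = μ • v := by
    rwa [sub_mulVec, smul_mulVec, one_mulVec, sub_eq_zero] at hv
  have hpv := Module.End.aeval_apply_of_mem_apply_eq_smul (p := p) hTv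
  rw [aeval_algHom_apply, hp, map_zero, LinearMap.zero_apply, eq_comm, smul_eq_zero] at hpv
  exact hpv.resolve_right hv0

theorem aeval_fromBlocks_one_zero_eq_zero [CommRing R] [DecidableEq m] [DecidableEq n]
    {C : Matrix n m R} {D : Matrix m n R} (hDC : D * C = 1) :
    aeval (fromBlocks 1 C D 0) ((X - 1) * (X ^ 2 - X - 1) : R[X]) = 0 := by
  simp only [map_mul, map_sub, map_one, aeval_X, map_pow]
  rw [← fromBlocks_one, sq, fromBlocks_multiply]
  simp only [sub_eq_add_neg, fromBlocks_neg, fromBlocks_add, fromBlocks_multiply]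
  -- `T² - T - 1 = [[C D - 1, 0], [0, 0]]`, which `T - 1` kills since `D (C D - 1) = 0`.
  simp [hDC, Matrix.mul_add, ← Matrix.mul_assoc]

theorem inv_fromBlocks_zero_zero_mul_fromBlocks [CommRing R] [DecidableEq m] [DecidableEq n]
    {A : Matrix n n R} {S : Matrix m m R} (hA : IsUnit A.det) (hS : IsUnit S.det)
    (B : Matrix n m R) (C : Matrix m n R) :
    (fromBlocks A 0 0 S)⁻¹ * fromBlocks A B C 0 = fromBlocks 1 (A⁻¹ * B) (S⁻¹ * C) 0 := by
  rw [inv_fromBlocks_zero₂₁_of_isUnit_iff _ _ _ (by simp [isUnit_iff_isUnit_det, hA, hS]),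
    fromBlocks_multiply]
  simp [nonsing_inv_mul _ hA]

end Matrix

open Real in
theorem Complex.eq_goldenRatio_or_eq_goldenConj {z : ℂ} (hz : z ^ 2 - z - 1 = 0) :
    z = goldenRatio ∨ z = goldenConj := by
  have hsum : (goldenRatio : ℂ) + goldenConj = 1 := by exact_mod_cast goldenRatio_add_goldenConj
  have hprod : (goldenRatio : ℂ) * goldenConj = -1 := by
    exact_mod_cast goldenRatio_mul_goldenConj
  have hfactor : (z - goldenRatio) * (z - goldenConj) = 0 := by
    linear_combination hz - z * hsum + hprod
  simpa [sub_eq_zero] using hfactor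

theorem mgw_eigenvalues_general {n m : ℕ}
    (A : Matrix (Fin n) (Fin n) ℝ) (B : Matrix (Fin n) (Fin m) ℝ)
    (hA : A.PosDef) (hB : B.rank = m)
    (M P : Matrix (Fin n ⊕ Fin m) (Fin n ⊕ Fin m) ℝ)
    (hM : M = Matrix.fromBlocks A B Bᵀ 0)
    (hP : P = Matrix.fromBlocks A 0 0 (Bᵀ * A⁻¹ * B))
    (lam : ℂ)
    (hlam : ((P⁻¹ * M).map (Complex.ofReal) - lam • 1).det = 0) :
    lam = 1 ∨ lam = (1 + Real.sqrt 5) / 2 ∨ lam = (1 - Real.sqrt 5) / 2 := by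
  have hS : (Bᵀ * A⁻¹ * B).PosDef := by
    simpa using hA.inv.conjTranspose_mul_mul_same
      (B.mulVec_injective_of_rank_eq_card (by rw [hB, Fintype.card_fin]))
  have hAdet : IsUnit A.det := (isUnit_iff_isUnit_det A).mp hA.isUnit
  have hSdet : IsUnit (Bᵀ * A⁻¹ * B).det := (isUnit_iff_isUnit_det _).mp hS.isUnit
  have hDC : (Bᵀ * A⁻¹ * B)⁻¹ * Bᵀ * (A⁻¹ * B) = 1 := by
    rw [Matrix.mul_assoc, ← Matrix.mul_assoc Bᵀ, nonsing_inv_mul _ hSdet]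
  have hT : (P⁻¹ * M).map Complex.ofReal = fromBlocks 1 ((A⁻¹ * B).map Complex.ofReal)
      (((Bᵀ * A⁻¹ * B)⁻¹ * Bᵀ).map Complex.ofReal) 0 := by
    rw [hP, hM, inv_fromBlocks_zero_zero_mul_fromBlocks hAdet hSdet, fromBlocks_map]
    simp
  have hDCℂ : ((Bᵀ * A⁻¹ * B)⁻¹ * Bᵀ).map Complex.ofReal * (A⁻¹ * B).map Complex.ofReal = 1 := by
    have h := congrArg (Matrix.map · Complex.ofRealHom) hDC
    rwa [Matrix.map_mul, Matrix.map_one _ (map_zero _) (map_one _)] at h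
  have hroot := eval_eq_zero_of_aeval_eq_zero_of_det_eq_zero
    (aeval_fromBlocks_one_zero_eq_zero hDCℂ) (hT ▸ hlam)
  simp only [eval_mul, eval_sub, eval_pow, eval_X, eval_one, mul_eq_zero] at hroot
  rcases hroot with hone | hgolden
  · exact Or.inl (sub_eq_zero.mp hone)
  · right
    simpa [Real.goldenRatio, Real.goldenConj] using Complex.eq_goldenRatio_or_eq_goldenConj hgolden

theorem mgw_eigenvalues {n m : ℕ}
    (A : Matrix (Fin n) (Fin n) ℝ) (B : Matrix (Fin n) (Fin m) ℝ)
    (hA : A.PosDef) (hB : B.rank = m) (hmn : m ≤ n)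
    (M P : Matrix (Fin n ⊕ Fin m) (Fin n ⊕ Fin m) ℝ)
    (hM : M = Matrix.fromBlocks A B Bᵀ 0)
    (hP : P = Matrix.fromBlocks A 0 0 (Bᵀ * A⁻¹ * B))
    (lam : ℂ)
    (hlam : ((P⁻¹ * M).map (Complex.ofReal) - lam • 1).det = 0) :
    lam = 1 ∨ lam = (1 + Real.sqrt 5) / 2 ∨ lam = (1 - Real.sqrt 5) / 2 :=
  mgw_eigenvalues_general A B hA hB M P hM hP lam hlam
end

section
/- Inexact Newton linear convergence in 1D: let f : ℝ → ℝ be C¹ with f(x*) = 0 and f'(x*) ≠ 0, and let η ∈ [0, 1). Then there is δ > 0 such that any iterate x with |x − x*| < δ and any step s satisfying |f'(x)s + f(x)| ≤ η|f(x)| yields |x + s − x*| ≤ η' |x − x*| for some fixed η' < 1 (depending only on η, f, x*). -/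
/-!
Near `x*`, `f'(x)` is within `ε` of `c = f'(x*)` and `f(x)` within `ε |x - x*|` of
`c (x - x*)`. With `d = f'(x)` and `e = x - x*`, the identity
`d (e + s) = (d s + f x) - (f x - d e)` splits the new error into the linear residual, at most
`η (|c| + ε) |e|`, and the linearization error, at most `2 ε |e|`; dividing by `|d| ≥ |c| - ε`
gives a contraction factor that is below `1` once `ε` is small.
-/

open Filter Topology

theorem abs_add_le_of_inexact_newton {c d e s fx ε η : ℝ} (hη : 0 ≤ η) (hεc : ε < |c|)
    (hd : |d - c| ≤ ε) (hfx : |fx - c * e| ≤ ε * |e|) (hres : |d * s + fx| ≤ η * |fx|) :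
    |e + s| ≤ (η * (|c| + ε) + 2 * ε) / (|c| - ε) * |e| := by
  have hd_low : |c| - ε ≤ |d| := by
    linarith [abs_sub_abs_le_abs_sub c d, abs_sub_comm c d]
  have hfx_le : |fx| ≤ (|c| + ε) * |e| := by
    calc |fx| = |(fx - c * e) + c * e| := by rw [sub_add_cancel]
      _ ≤ ε * |e| + |c| * |e| := by rw [← abs_mul]; exact (abs_add_le _ _).trans (by gcongr)
      _ = (|c| + ε) * |e| := by ring
  have hlin : |fx - d * e| ≤ 2 * ε * |e| := by
    calc |fx - d * e| = |(fx - c * e) - (d - c) * e| := by ring_nf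
      _ ≤ ε * |e| + ε * |e| :=
          (abs_sub _ _).trans (add_le_add hfx (by rw [abs_mul]; gcongr))
      _ = 2 * ε * |e| := by ring
  have key : |d| * |e + s| ≤ (η * (|c| + ε) + 2 * ε) * |e| := by
    calc |d| * |e + s| = |(d * s + fx) - (fx - d * e)| := by rw [← abs_mul]; ring_nf
      _ ≤ η * ((|c| + ε) * |e|) + 2 * ε * |e| :=
          (abs_sub _ _).trans (add_le_add (hres.trans (by gcongr)) hlin)
      _ = (η * (|c| + ε) + 2 * ε) * |e| := by ring
  rw [div_mul_eq_mul_div, le_div_iff₀ (by linarith)]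
  nlinarith [abs_nonneg (e + s)]

theorem eventually_abs_deriv_sub_le_and_abs_linearization_le {f : ℝ → ℝ} {xs ε : ℝ}
    (hf : HasDerivAt f (deriv f xs) xs) (hcont : ContinuousAt (deriv f) xs) (hε : 0 < ε) :
    ∀ᶠ x in 𝓝 xs, |deriv f x - deriv f xs| ≤ ε ∧
      |f x - f xs - deriv f xs * (x - xs)| ≤ ε * |x - xs| := by
  have hderiv : ∀ᶠ x in 𝓝 xs, dist (deriv f x) (deriv f xs) < ε :=
    Metric.tendsto_nhds.mp hcont ε hε
  filter_upwards [hderiv, (hasDerivAt_iff_isLittleO.mp hf).def hε] with x hx hlin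
  refine ⟨(Real.dist_eq _ _ ▸ hx).le, ?_⟩
  simpa only [Real.norm_eq_abs, smul_eq_mul, mul_comm] using hlin

theorem inexact_newton_linear_1d (f : ℝ → ℝ) (hf : ContDiff ℝ 1 f)
    (xs : ℝ) (hroot : f xs = 0) (hderiv : deriv f xs ≠ 0)
    (η : ℝ) (hη0 : 0 ≤ η) (hη1 : η < 1) :
    ∃ η' < 1, ∃ δ > 0, ∀ x s : ℝ, |x - xs| < δ →
      |deriv f x * s + f x| ≤ η * |f x| →
      |x + s - xs| ≤ η' * |x - xs| := by
  set a := |deriv f xs|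
  have ha : 0 < a := abs_pos.mpr hderiv
  -- any `ε` with `(3 + η) ε < (1 - η) a` makes the contraction factor below `1`
  set ε := a * (1 - η) / 4 with hε_def
  have hε : 0 < ε := by
    have : 0 < 1 - η := by linarith
    positivity
  have hεa : ε < a := by nlinarith
  refine ⟨(η * (a + ε) + 2 * ε) / (a - ε), ?_, ?_⟩
  · rw [div_lt_one (by linarith)]
    nlinarith [mul_pos ha (sub_pos.mpr hη1)]
  obtain ⟨δ, hδ, hnear⟩ := Metric.eventually_nhds_iff.mp <|
    eventually_abs_deriv_sub_le_and_abs_linearization_le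
      (hf.differentiable one_ne_zero xs).hasDerivAt (hf.continuous_deriv le_rfl).continuousAt hε
  refine ⟨δ, hδ, fun x s hx hres => ?_⟩
  obtain ⟨hd, hlin⟩ := hnear (by rwa [Real.dist_eq])
  rw [hroot, sub_zero] at hlin
  rw [add_sub_right_comm]
  exact abs_add_le_of_inexact_newton hη0 hεa hd hlin hres
end
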